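/- Let X be the birth–death chain with l_n = n/(2n+1) and r_n = (n+1)/(2n+1) for n ≥ 1, started at k ≥ 1. Then t_n = 1/(n+1) for all n ≥ 0, the chain hits 0 with probability 1, and E[X_m] → +∞ as m → ∞. -/

import Mathlib

open MeasureTheory Filter Topology Finset
open scoped ENNReal NNReal Classical

/-- Partial products `t_n = (l_1 ⋯ l_n)/(r_1 ⋯ r_n)`, with `t_0 = 1`. -/
noncomputable def tp (l r : ℕ → ℝ) (n : ℕ) : ℝ :=
  (∏ i ∈ Finset.Icc 1 n, l i) / (∏ i ∈ Finset.Icc 1 n, r i)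

/-- `x_n = Σ_{i=0}^{n-1} t_i`. -/
noncomputable def xp (l r : ℕ → ℝ) (n : ℕ) : ℝ :=
  ∑ i ∈ Finset.range n, tp l r i

/-- The natural filtration of the process `X` (σ-algebra generated by `X_0, …, X_m`). -/
def natFilt {Ω : Type*} (X : ℕ → Ω → ℕ) (m : ℕ) : MeasurableSpace Ω :=
  ⨆ i ∈ Finset.range (m + 1), MeasurableSpace.comap (X i) ⊤

/-- A birth–death chain on ℕ started at `k`, with up–probabilities `r n` and
down–probabilities `l n` for states `n ≥ 1`, and `0` absorbing.  The Markov
property is encoded by conditioning on arbitrary events of the natural filtration. -/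
structure IsBDChain {Ω : Type*} [MeasurableSpace Ω] (P : Measure Ω)
    (X : ℕ → Ω → ℕ) (k : ℕ) (l r : ℕ → ℝ) : Prop where
  isProb : IsProbabilityMeasure P
  one_le_k : 1 ≤ k
  l_pos : ∀ n, 1 ≤ n → 0 < l n
  r_pos : ∀ n, 1 ≤ n → 0 < r n
  lr_one : ∀ n, 1 ≤ n → l n + r n = 1
  meas : ∀ m, Measurable (X m)
  init : ∀ᵐ ω ∂P, X 0 ω = k
  absorb : ∀ᵐ ω ∂P, ∀ m, X m ω = 0 → X (m + 1) ω = 0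
  step_up : ∀ m n, 1 ≤ n → ∀ A : Set Ω, MeasurableSet[natFilt X m] A →
    P (A ∩ {ω | X m ω = n ∧ X (m + 1) ω = n + 1}) =
      ENNReal.ofReal (r n) * P (A ∩ {ω | X m ω = n})
  step_down : ∀ m n, 1 ≤ n → ∀ A : Set Ω, MeasurableSet[natFilt X m] A →
    P (A ∩ {ω | X m ω = n ∧ X (m + 1) ω = n - 1}) =
      ENNReal.ofReal (l n) * P (A ∩ {ω | X m ω = n})

/-- A (finite-valued) stopping time for the natural filtration of `X`. -/
def IsBDStop {Ω : Type*} (X : ℕ → Ω → ℕ) (T : Ω → ℕ) : Prop :=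
  ∀ m, MeasurableSet[natFilt X m] {ω | T ω = m}

/-- An extended-ℕ-valued stopping time for the natural filtration of `X`. -/
def IsBDStopE {Ω : Type*} (X : ℕ → Ω → ℕ) (T : Ω → ℕ∞) : Prop :=
  ∀ m : ℕ, MeasurableSet[natFilt X m] {ω | T ω = (m : ℕ∞)}

/-- First hitting time of the set `S ⊆ ℕ` by the path `m ↦ X m ω`, valued in `ℕ∞`. -/
noncomputable def hitTime {Ω : Type*} (X : ℕ → Ω → ℕ) (S : Set ℕ) (ω : Ω) : ℕ∞ :=
  sInf ((fun m : ℕ => (m : ℕ∞)) '' {m | X m ω ∈ S})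

/-- `T_∂`: the first hitting time of `0`, with value `∞` if `0` is never hit. -/
noncomputable def hit0 {Ω : Type*} (X : ℕ → Ω → ℕ) (ω : Ω) : ℕ∞ :=
  hitTime X {0} ω

/-- `G_T^n`: the number of times `m` with `0 ≤ m ≤ T-1` and `X_m = n` (finite `T`). -/
def count {Ω : Type*} (X : ℕ → Ω → ℕ) (n : ℕ) (T : Ω → ℕ) (ω : Ω) : ℕ :=
  ((Finset.range (T ω)).filter fun m => X m ω = n).card

/-- `G_τ^n` for an `ℕ∞`-valued time `τ`, valued in `ℝ≥0∞`. -/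
noncomputable def countE {Ω : Type*} (X : ℕ → Ω → ℕ) (n : ℕ) (τ : Ω → ℕ∞) (ω : Ω) : ℝ≥0∞ :=
  ∑' m : ℕ, if (m : ℕ∞) < τ ω ∧ X m ω = n then 1 else 0

/-!
The scale function `x_n = t_0 + ⋯ + t_{n-1}` is harmonic for the chain and vanishes at `0`, so
`x(X_m)` is a nonnegative martingale with `E[x(X_m)] = x_k`. Here `x_n` is the harmonic number
`H_n → ∞`: the martingale converges almost surely, which forces absorption at `0`. Since `t` is
decreasing, `x` is concave, `x_n ≤ x_N + n t_N` for `n ≥ 1`, hence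
`x_k ≤ x_N P(X_m ≥ 1) + t_N E[X_m]`; letting `m → ∞` and then `N → ∞` gives `E[X_m] → ∞`.
-/

def IsBDHarmonic (l r : ℕ → ℝ) (g : ℕ → ℝ) : Prop :=
  ∀ n, 1 ≤ n → r n * g (n + 1) + l n * g (n - 1) = g n

lemma tp_zero (l r : ℕ → ℝ) : tp l r 0 = 1 := by
  simp [tp]

lemma tp_succ (l r : ℕ → ℝ) (n : ℕ) : tp l r (n + 1) = tp l r n * (l (n + 1) / r (n + 1)) := by
  simp only [tp, Finset.prod_Icc_succ_top (Nat.le_add_left 1 n), mul_div_mul_comm]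

lemma tp_pos {l r : ℕ → ℝ} (hl : ∀ n, 1 ≤ n → 0 < l n) (hr : ∀ n, 1 ≤ n → 0 < r n) (n : ℕ) :
    0 < tp l r n :=
  div_pos (Finset.prod_pos fun i hi => hl i (Finset.mem_Icc.1 hi).1)
    (Finset.prod_pos fun i hi => hr i (Finset.mem_Icc.1 hi).1)

lemma xp_zero (l r : ℕ → ℝ) : xp l r 0 = 0 := by
  simp [xp]

lemma xp_succ (l r : ℕ → ℝ) (n : ℕ) : xp l r (n + 1) = xp l r n + tp l r n :=
  Finset.sum_range_succ _ _

/-- `r_n t_n = l_n t_{n-1}` balances the two increments. -/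
lemma isBDHarmonic_xp {l r : ℕ → ℝ} (hr : ∀ n, 1 ≤ n → r n ≠ 0)
    (hlr : ∀ n, 1 ≤ n → l n + r n = 1) : IsBDHarmonic l r (xp l r) := by
  rintro (_ | j) hn
  · omega
  have hbalance : r (j + 1) * (tp l r j * (l (j + 1) / r (j + 1))) = l (j + 1) * tp l r j := by
    field_simp [hr (j + 1) hn]
  rw [Nat.add_sub_cancel, xp_succ, xp_succ, tp_succ]
  linear_combination hbalance + (xp l r j + tp l r j) * hlr (j + 1) hn

lemma sum_range_le_sum_range_add_mul {t : ℕ → ℝ} (ht : ∀ i, 0 ≤ t i) (hanti : Antitone t)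
    (N n : ℕ) : ∑ i ∈ Finset.range n, t i ≤ ∑ i ∈ Finset.range N, t i + n * t N := by
  induction n with
  | zero => simpa using Finset.sum_nonneg fun i _ => ht i
  | succ n ih =>
    rcases le_or_gt (n + 1) N with h | h
    · have := Finset.sum_le_sum_of_subset_of_nonneg (Finset.range_mono h) fun i _ _ => ht i
      have : 0 ≤ ((n + 1 : ℕ) : ℝ) * t N := mul_nonneg (Nat.cast_nonneg _) (ht N)
      linarith
    · rw [Finset.sum_range_succ]
      have := hanti (Nat.le_of_lt_succ h)
      push_cast
      linarith

/-- The path is eventually trapped below some level, where every step moves `g` by at least the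
smallest gap of `g` there. -/
lemma exists_eq_zero_of_tendsto_comp {x : ℕ → ℕ} {g : ℕ → ℝ} (hg : StrictMono g)
    (hg_top : Tendsto g atTop atTop)
    (hstep : ∀ m, 1 ≤ x m → x (m + 1) = x m + 1 ∨ x (m + 1) = x m - 1) {c : ℝ}
    (hc : Tendsto (fun m => g (x m)) atTop (𝓝 c)) : ∃ m, x m = 0 := by
  by_contra! hpos
  obtain ⟨B, hB⟩ := eventually_atTop.1 (hg_top.eventually_gt_atTop (c + 1))
  set δ := (Finset.range (B + 1)).inf' ⟨0, by simp⟩ fun n => g (n + 1) - g n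
  have hgap : ∀ n < B + 1, δ ≤ g (n + 1) - g n := fun n hn =>
    Finset.inf'_le _ (Finset.mem_range.2 hn)
  have hδ : 0 < δ := (Finset.lt_inf'_iff _).2 fun n _ => sub_pos.2 (hg n.lt_succ_self)
  have hbelow : ∀ᶠ m in atTop, x m < B :=
    (hc.eventually (gt_mem_nhds (lt_add_one c))).mono fun m hm => by
      by_contra! h
      exact lt_asymm hm (hB _ h)
  have hdiff : Tendsto (fun m => g (x (m + 1)) - g (x m)) atTop (𝓝 0) := by
    simpa using (hc.comp (tendsto_add_atTop_nat 1)).sub hc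
  obtain ⟨m, hm, hsmall⟩ := (hbelow.and (hdiff.eventually (Metric.ball_mem_nhds 0 hδ))).exists
  simp only [Real.dist_eq, sub_zero, abs_lt] at hsmall
  obtain ⟨j, hj⟩ : ∃ j, x m = j + 1 := ⟨x m - 1, by have := hpos m; omega⟩
  rcases hstep m (by omega) with hup | hdown
  · have := hgap (x m) (by omega)
    rw [hup] at hsmall
    linarith
  · have := hgap j (by omega)
    rw [hdown, hj, Nat.add_sub_cancel] at hsmall
    linarith

lemma ENNReal.tendsto_nhds_top_of_le_mul_add_mul {c : ℝ≥0∞} (hc : c ≠ 0) {a b p u : ℕ → ℝ≥0∞}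
    (ha : ∀ N, a N ≠ ⊤) (hb : Tendsto b atTop (𝓝 0)) (hp : Tendsto p atTop (𝓝 0))
    (h : ∀ N m, c ≤ a N * p m + b N * u m) : Tendsto u atTop (𝓝 ⊤) := by
  refine ENNReal.tendsto_nhds_top fun n => ?_
  have hc2 : 0 < c / 2 := ENNReal.half_pos hc
  obtain ⟨N, hN⟩ : ∃ N, b N * n < c / 2 := by
    have := ENNReal.Tendsto.mul_const hb (Or.inr (ENNReal.natCast_ne_top n))
    rw [zero_mul] at this
    exact (this.eventually (gt_mem_nhds hc2)).exists
  have hap : Tendsto (fun m => a N * p m) atTop (𝓝 0) := by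
    simpa using ENNReal.Tendsto.const_mul hp (Or.inr (ha N))
  filter_upwards [hap.eventually (gt_mem_nhds hc2)] with m hm
  by_contra! hle
  refine lt_irrefl c (calc
    c ≤ a N * p m + b N * u m := h N m
    _ ≤ a N * p m + b N * n := by gcongr
    _ < c / 2 + c / 2 := ENNReal.add_lt_add hm hN
    _ = c := ENNReal.add_halves c)

section natFilt

variable {Ω : Type*} {X : ℕ → Ω → ℕ}

lemma comap_le_natFilt {j m : ℕ} (hj : j ≤ m) : MeasurableSpace.comap (X j) ⊤ ≤ natFilt X m :=
  le_iSup₂ (f := fun i (_ : i ∈ Finset.range (m + 1)) => MeasurableSpace.comap (X i) ⊤) j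
    (Finset.mem_range.2 (Nat.lt_succ_of_le hj))

lemma natFilt_mono : Monotone (natFilt X) := fun _ _ h =>
  iSup₂_le fun _ hi => comap_le_natFilt (by simp at hi; omega)

lemma natFilt_le [MeasurableSpace Ω] (hX : ∀ m, Measurable (X m)) (m : ℕ) :
    natFilt X m ≤ ‹MeasurableSpace Ω› :=
  iSup₂_le fun i _ => (hX i).comap_le

def natFiltration [MeasurableSpace Ω] (hX : ∀ m, Measurable (X m)) :
    Filtration ℕ ‹MeasurableSpace Ω› :=
  ⟨natFilt X, natFilt_mono, natFilt_le hX⟩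

end natFilt

section fibers

variable {Ω : Type*} [MeasurableSpace Ω] {P : Measure Ω} {Y : Ω → ℕ} {S : Set Ω}

lemma setLIntegral_eq_tsum_fiber (hY : Measurable Y) (hS : MeasurableSet S) (g : Ω → ℝ≥0∞) :
    ∫⁻ ω in S, g ω ∂P = ∑' n, ∫⁻ ω in S ∩ {ω | Y ω = n}, g ω ∂P := by
  have hcover : ⋃ n, S ∩ {ω | Y ω = n} = S := by ext ω; simp
  have hdisj : Pairwise (Function.onFun Disjoint fun n => S ∩ {ω | Y ω = n}) := fun a b hab =>
    Set.disjoint_left.2 fun ω ha hb => hab (ha.2.symm.trans hb.2)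
  conv_lhs => rw [← hcover]
  exact lintegral_iUnion (fun n => hS.inter (hY (measurableSet_singleton n))) hdisj g

lemma setLIntegral_fiber_comp (hY : Measurable Y) (hS : MeasurableSet S) (f : ℕ → ℝ≥0∞)
    (n : ℕ) : ∫⁻ ω in S ∩ {ω | Y ω = n}, f (Y ω) ∂P = f n * P (S ∩ {ω | Y ω = n}) := by
  have hfib : MeasurableSet (S ∩ {ω | Y ω = n}) := hS.inter (hY (measurableSet_singleton n))
  rw [setLIntegral_congr_fun hfib (g := fun _ => f n) fun ω hω => by rw [hω.2],
    setLIntegral_const]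

lemma setLIntegral_comp_eq_tsum (hY : Measurable Y) (hS : MeasurableSet S) (f : ℕ → ℝ≥0∞) :
    ∫⁻ ω in S, f (Y ω) ∂P = ∑' n, f n * P (S ∩ {ω | Y ω = n}) := by
  rw [setLIntegral_eq_tsum_fiber hY hS]
  exact tsum_congr (setLIntegral_fiber_comp hY hS f)

end fibers

namespace IsBDChain

variable {Ω : Type*} [MeasurableSpace Ω] {P : Measure Ω} {X : ℕ → Ω → ℕ} {k : ℕ}
  {l r : ℕ → ℝ} (hC : IsBDChain P X k l r)
include hC

lemma measurableSet_fiber {m : ℕ} {A : Set Ω} (hA : MeasurableSet[natFilt X m] A) (n : ℕ) :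
    MeasurableSet (A ∩ {ω | X m ω = n}) :=
  (natFilt_le hC.meas m A hA).inter (hC.meas m (measurableSet_singleton n))

lemma measure_fiber_up {m n : ℕ} (hn : 1 ≤ n) {A : Set Ω} (hA : MeasurableSet[natFilt X m] A) :
    P (A ∩ {ω | X m ω = n} ∩ {ω | X (m + 1) ω = n + 1}) =
      ENNReal.ofReal (r n) * P (A ∩ {ω | X m ω = n}) := by
  rw [Set.inter_assoc, ← Set.ofPred_and]
  exact hC.step_up m n hn A hA

lemma measure_fiber_down {m n : ℕ} (hn : 1 ≤ n) {A : Set Ω}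
    (hA : MeasurableSet[natFilt X m] A) :
    P (A ∩ {ω | X m ω = n} ∩ {ω | X (m + 1) ω = n - 1}) =
      ENNReal.ofReal (l n) * P (A ∩ {ω | X m ω = n}) := by
  rw [Set.inter_assoc, ← Set.ofPred_and]
  exact hC.step_down m n hn A hA

/-- The up- and down-moves already carry the full mass `r n + l n = 1` of the fiber. -/
lemma measure_fiber_jump_eq_zero {m n j : ℕ} (hn : 1 ≤ n) {A : Set Ω}
    (hA : MeasurableSet[natFilt X m] A) (hup : j ≠ n + 1) (hdown : j ≠ n - 1) :
    P (A ∩ {ω | X m ω = n} ∩ {ω | X (m + 1) ω = j}) = 0 := by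
  have := hC.isProb
  set S := A ∩ {ω | X m ω = n}
  have hnext : ∀ i, MeasurableSet (S ∩ {ω | X (m + 1) ω = i}) := fun i =>
    (hC.measurableSet_fiber hA n).inter (hC.meas (m + 1) (measurableSet_singleton i))
  have hdisj : ∀ i i', i ≠ i' →
      Disjoint (S ∩ {ω | X (m + 1) ω = i}) (S ∩ {ω | X (m + 1) ω = i'}) := fun i i' h =>
    Set.disjoint_left.2 fun ω hi hi' => h (hi.2.symm.trans hi'.2)
  have hmass : P S + P (S ∩ {ω | X (m + 1) ω = j}) ≤ P S + 0 := calc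
    P S + P (S ∩ {ω | X (m + 1) ω = j})
        = P (S ∩ {ω | X (m + 1) ω = n + 1}) + P (S ∩ {ω | X (m + 1) ω = n - 1})
          + P (S ∩ {ω | X (m + 1) ω = j}) := by
      rw [hC.measure_fiber_up hn hA, hC.measure_fiber_down hn hA, ← add_mul,
        ← ENNReal.ofReal_add (hC.r_pos n hn).le (hC.l_pos n hn).le, add_comm (r n),
        hC.lr_one n hn, ENNReal.ofReal_one, one_mul]
    _ = P (S ∩ {ω | X (m + 1) ω = n + 1} ∪ S ∩ {ω | X (m + 1) ω = n - 1}
          ∪ S ∩ {ω | X (m + 1) ω = j}) := by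
      rw [measure_union (Disjoint.union_left (hdisj _ _ hup.symm) (hdisj _ _ hdown.symm))
        (hnext j), measure_union (hdisj _ _ (by omega)) (hnext _)]
    _ ≤ P S := measure_mono (by simp only [Set.union_subset_iff]; exact
        ⟨⟨Set.inter_subset_left, Set.inter_subset_left⟩, Set.inter_subset_left⟩)
    _ = P S + 0 := (add_zero _).symm
  exact nonpos_iff_eq_zero.1 (ENNReal.le_of_add_le_add_left (measure_ne_top P S) hmass)

lemma setLIntegral_fiber_comp_succ {m n : ℕ} (hn : 1 ≤ n) {A : Set Ω}
    (hA : MeasurableSet[natFilt X m] A) (f : ℕ → ℝ≥0∞) :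
    ∫⁻ ω in A ∩ {ω | X m ω = n}, f (X (m + 1) ω) ∂P =
      (ENNReal.ofReal (r n) * f (n + 1) + ENNReal.ofReal (l n) * f (n - 1)) *
        P (A ∩ {ω | X m ω = n}) := by
  rw [setLIntegral_comp_eq_tsum (hC.meas (m + 1)) (hC.measurableSet_fiber hA n),
    tsum_eq_sum (s := {n + 1, n - 1}) fun j hj => by
      simp only [Finset.mem_insert, Finset.mem_singleton, not_or] at hj
      rw [hC.measure_fiber_jump_eq_zero hn hA hj.1 hj.2, mul_zero],
    Finset.sum_pair (by omega), hC.measure_fiber_up hn hA, hC.measure_fiber_down hn hA]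
  ring

lemma setLIntegral_comp_succ_eq {f : ℕ → ℝ≥0∞}
    (hf : ∀ n, 1 ≤ n → ENNReal.ofReal (r n) * f (n + 1) + ENNReal.ofReal (l n) * f (n - 1) = f n)
    {m : ℕ} {A : Set Ω} (hA : MeasurableSet[natFilt X m] A) :
    ∫⁻ ω in A, f (X (m + 1) ω) ∂P = ∫⁻ ω in A, f (X m ω) ∂P := by
  have hA' := natFilt_le hC.meas m A hA
  rw [setLIntegral_eq_tsum_fiber (hC.meas m) hA', setLIntegral_eq_tsum_fiber (hC.meas m) hA']
  refine tsum_congr fun n => ?_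
  rw [setLIntegral_fiber_comp (hC.meas m) hA' f]
  rcases Nat.eq_zero_or_pos n with rfl | hn
  · rw [← setLIntegral_const]
    exact setLIntegral_congr_fun_ae (hC.measurableSet_fiber hA 0)
      (hC.absorb.mono fun ω hω hωA => by rw [hω m hωA.2])
  · rw [hC.setLIntegral_fiber_comp_succ hn hA, hf n hn]

lemma lintegral_comp_eq {f : ℕ → ℝ≥0∞}
    (hf : ∀ n, 1 ≤ n → ENNReal.ofReal (r n) * f (n + 1) + ENNReal.ofReal (l n) * f (n - 1) = f n)
    (m : ℕ) : ∫⁻ ω, f (X m ω) ∂P = f k := by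
  have := hC.isProb
  induction m with
  | zero =>
    have hinit : (fun ω => f (X 0 ω)) =ᵐ[P] fun _ => f k := hC.init.mono fun ω h => congrArg f h
    simp [lintegral_congr_ae hinit]
  | succ m ih =>
    rw [← setLIntegral_univ, hC.setLIntegral_comp_succ_eq hf MeasurableSet.univ, setLIntegral_univ,
      ih]

lemma ofReal_isBDHarmonic {g : ℕ → ℝ} (hg0 : ∀ n, 0 ≤ g n) (hg : IsBDHarmonic l r g) (n : ℕ)
    (hn : 1 ≤ n) :
    ENNReal.ofReal (r n) * ENNReal.ofReal (g (n + 1)) +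
      ENNReal.ofReal (l n) * ENNReal.ofReal (g (n - 1)) = ENNReal.ofReal (g n) := by
  have hr := (hC.r_pos n hn).le
  have hl := (hC.l_pos n hn).le
  rw [← ENNReal.ofReal_mul hr, ← ENNReal.ofReal_mul hl,
    ← ENNReal.ofReal_add (mul_nonneg hr (hg0 _)) (mul_nonneg hl (hg0 _)), hg n hn]

lemma lintegral_ofReal_comp_eq {g : ℕ → ℝ} (hg0 : ∀ n, 0 ≤ g n) (hg : IsBDHarmonic l r g)
    (m : ℕ) : ∫⁻ ω, ENNReal.ofReal (g (X m ω)) ∂P = ENNReal.ofReal (g k) :=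
  hC.lintegral_comp_eq (f := fun n => ENNReal.ofReal (g n)) (hC.ofReal_isBDHarmonic hg0 hg) m

lemma martingale_comp {g : ℕ → ℝ} (hg0 : ∀ n, 0 ≤ g n) (hg : IsBDHarmonic l r g) :
    Martingale (fun m ω => g (X m ω)) (natFiltration hC.meas) P := by
  have := hC.isProb
  have hmeas : ∀ m, Measurable fun ω => g (X m ω) := fun m =>
    (measurable_from_top (f := g)).comp (hC.meas m)
  have hint : ∀ m, Integrable (fun ω => g (X m ω)) P := fun m => by
    simpa only [ENNReal.toReal_ofReal (hg0 _)] using integrable_toReal_of_lintegral_ne_top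
      (hmeas m).ennreal_ofReal.aemeasurable
      (by rw [hC.lintegral_ofReal_comp_eq hg0 hg m]; exact ENNReal.ofReal_ne_top)
  refine martingale_of_setIntegral_eq_succ (fun m => ?_) hint fun m A hA => ?_
  · exact ((measurable_from_top (f := g)).comp
      (Measurable.of_comap_le (comap_le_natFilt le_rfl))).stronglyMeasurable
  · have hA' := natFilt_le hC.meas m A hA
    rw [integral_eq_lintegral_of_nonneg_ae (ae_of_all _ fun _ => hg0 _)
        (hmeas m).aestronglyMeasurable.restrict,
      integral_eq_lintegral_of_nonneg_ae (ae_of_all _ fun _ => hg0 _)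
        (hmeas (m + 1)).aestronglyMeasurable.restrict,
      hC.setLIntegral_comp_succ_eq (f := fun n => ENNReal.ofReal (g n))
        (hC.ofReal_isBDHarmonic hg0 hg) hA]

lemma ae_step : ∀ᵐ ω ∂P, ∀ m, 1 ≤ X m ω → X (m + 1) ω = X m ω + 1 ∨ X (m + 1) ω = X m ω - 1 := by
  rw [ae_all_iff]
  intro m
  have hjump : ∀ n j, ∀ᵐ ω ∂P, 1 ≤ n → j ≠ n + 1 → j ≠ n - 1 →
      ω ∉ {ω | X m ω = n} ∩ {ω | X (m + 1) ω = j} := by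
    intro n j
    by_cases h : 1 ≤ n ∧ j ≠ n + 1 ∧ j ≠ n - 1
    · have hnull := hC.measure_fiber_jump_eq_zero (m := m) h.1 MeasurableSet.univ h.2.1 h.2.2
      rw [Set.univ_inter] at hnull
      exact (measure_eq_zero_iff_ae_notMem.1 hnull).mono fun ω hω _ _ _ => hω
    · exact ae_of_all _ fun ω h1 h2 h3 => absurd ⟨h1, h2, h3⟩ h
  filter_upwards [ae_all_iff.2 fun n => ae_all_iff.2 (hjump n)] with ω hω hpos
  by_contra! hne
  exact hω _ _ hpos hne.1 hne.2 ⟨rfl, rfl⟩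

lemma strictMono_xp : StrictMono (xp l r) :=
  strictMono_nat_of_lt_succ fun n => by
    rw [xp_succ]
    linarith [tp_pos hC.l_pos hC.r_pos n]

lemma xp_nonneg (n : ℕ) : 0 ≤ xp l r n :=
  xp_zero l r ▸ hC.strictMono_xp.monotone (Nat.zero_le n)

/-- `xp l r ∘ X` is a nonnegative martingale, hence converges, which a path stuck in the positive
states cannot do. -/
theorem ae_exists_eq_zero (hx : Tendsto (xp l r) atTop atTop) : ∀ᵐ ω ∂P, ∃ m, X m ω = 0 := by
  have := hC.isProb
  have hharm := isBDHarmonic_xp (fun n hn => (hC.r_pos n hn).ne') hC.lr_one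
  have hx0 := hC.xp_nonneg
  have hbdd : ∀ m, eLpNorm (fun ω => xp l r (X m ω)) 1 P ≤ (xp l r k).toNNReal := fun m => by
    simp only [eLpNorm_one_eq_lintegral_enorm, Real.enorm_of_nonneg (hx0 _),
      hC.lintegral_ofReal_comp_eq hx0 hharm m]
    rfl
  filter_upwards [(hC.martingale_comp hx0 hharm).submartingale.exists_ae_tendsto_of_bdd hbdd,
    hC.ae_step] with ω ⟨c, hc⟩ hstep
  exact exists_eq_zero_of_tendsto_comp hC.strictMono_xp hx hstep hc

lemma tendsto_measure_one_le_nhds_zero (habs : ∀ᵐ ω ∂P, ∃ m, X m ω = 0) :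
    Tendsto (fun m => P {ω | 1 ≤ X m ω}) atTop (𝓝 0) := by
  have := hC.isProb
  simpa using tendsto_measure_of_ae_tendsto_indicator_of_isFiniteMeasure atTop
    MeasurableSet.empty (fun m => measurableSet_le measurable_const (hC.meas m)) <| by
      filter_upwards [habs, hC.absorb] with ω ⟨m₀, h₀⟩ habsorb
      refine eventually_atTop.2 ⟨m₀, fun m hm => ?_⟩
      have : X m ω = 0 := Nat.le_induction h₀ (fun m _ ih => habsorb m ih) m hm
      simp [this]

/-- Concavity of the scale function: `x_n ≤ x_N + n t_N` on the positive states, `x_0 = 0`. -/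
lemma ofReal_xp_le_measure_add_lintegral (hanti : Antitone (tp l r)) (N m : ℕ) :
    ENNReal.ofReal (xp l r k) ≤
      ENNReal.ofReal (xp l r N) * P {ω | 1 ≤ X m ω} +
        ENNReal.ofReal (tp l r N) * ∫⁻ ω, (X m ω : ℝ≥0∞) ∂P := by
  have ht0 : ∀ n, 0 ≤ tp l r n := fun n => (tp_pos hC.l_pos hC.r_pos n).le
  have hpos : MeasurableSet {ω | 1 ≤ X m ω} := measurableSet_le measurable_const (hC.meas m)
  have hpoint : ∀ ω, ENNReal.ofReal (xp l r (X m ω)) ≤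
      {ω | 1 ≤ X m ω}.indicator (fun _ => ENNReal.ofReal (xp l r N)) ω +
        ENNReal.ofReal (tp l r N) * X m ω := by
    intro ω
    rcases Nat.eq_zero_or_pos (X m ω) with h | h
    · simp [h, xp_zero]
    · rw [Set.indicator_of_mem (show ω ∈ {ω | 1 ≤ X m ω} from h), ← ENNReal.ofReal_natCast,
        ← ENNReal.ofReal_mul (ht0 N),
        ← ENNReal.ofReal_add (hC.xp_nonneg N) (mul_nonneg (ht0 N) (Nat.cast_nonneg _))]
      have := sum_range_le_sum_range_add_mul ht0 hanti N (X m ω)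
      exact ENNReal.ofReal_le_ofReal (by simp only [xp]; linarith)
  have hharm := isBDHarmonic_xp (fun n hn => (hC.r_pos n hn).ne') hC.lr_one
  calc ENNReal.ofReal (xp l r k) = ∫⁻ ω, ENNReal.ofReal (xp l r (X m ω)) ∂P :=
        (hC.lintegral_ofReal_comp_eq hC.xp_nonneg hharm m).symm
    _ ≤ ∫⁻ ω, {ω | 1 ≤ X m ω}.indicator (fun _ => ENNReal.ofReal (xp l r N)) ω +
          ENNReal.ofReal (tp l r N) * X m ω ∂P := lintegral_mono hpoint
    _ = _ := by
      rw [lintegral_add_left (measurable_const.indicator hpos), lintegral_indicator_const hpos,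
        lintegral_const_mul' _ _ ENNReal.ofReal_ne_top]

theorem tendsto_lintegral_nhds_top (hanti : Antitone (tp l r)) (ht : Tendsto (tp l r) atTop (𝓝 0))
    (habs : ∀ᵐ ω ∂P, ∃ m, X m ω = 0) :
    Tendsto (fun m => ∫⁻ ω, (X m ω : ℝ≥0∞) ∂P) atTop (𝓝 ⊤) := by
  have hk : 0 < xp l r k := xp_zero l r ▸ hC.strictMono_xp hC.one_le_k
  refine ENNReal.tendsto_nhds_top_of_le_mul_add_mul (ENNReal.ofReal_pos.2 hk).ne'
    (fun _ => ENNReal.ofReal_ne_top) ?_ (hC.tendsto_measure_one_le_nhds_zero habs)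
    (hC.ofReal_xp_le_measure_add_lintegral hanti)
  simpa using ENNReal.tendsto_ofReal ht

end IsBDChain

lemma tp_eq_one_div {l r : ℕ → ℝ} (hl : ∀ n : ℕ, 1 ≤ n → l n = (n : ℝ) / (2 * n + 1))
    (hr : ∀ n : ℕ, 1 ≤ n → r n = ((n : ℝ) + 1) / (2 * n + 1)) (n : ℕ) :
    tp l r n = 1 / ((n : ℝ) + 1) := by
  induction n with
  | zero => simp [tp_zero]
  | succ n ih =>
    rw [tp_succ, ih, hl _ (Nat.le_add_left 1 n), hr _ (Nat.le_add_left 1 n)]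
    push_cast
    field_simp

/-- For the chain with `l_n = n/(2n+1)` and `r_n = (n+1)/(2n+1)`
started at `k ≥ 1`: `t_n = 1/(n+1)` for all `n`, the chain hits `0` with
probability `1`, and `E[X_m] → +∞` as `m → ∞`. -/
theorem stmt17 {Ω : Type*} [MeasurableSpace Ω] (P : Measure Ω) (X : ℕ → Ω → ℕ)
    (k : ℕ) (l r : ℕ → ℝ) (hC : IsBDChain P X k l r)
    (hl : ∀ n : ℕ, 1 ≤ n → l n = (n : ℝ) / (2 * n + 1))
    (hr : ∀ n : ℕ, 1 ≤ n → r n = ((n : ℝ) + 1) / (2 * n + 1)) :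
    (∀ n : ℕ, tp l r n = 1 / ((n : ℝ) + 1)) ∧
    P {ω | ∃ m : ℕ, X m ω = 0} = 1 ∧
    Tendsto (fun m => ∫⁻ ω, (X m ω : ℝ≥0∞) ∂P) atTop (nhds ⊤) := by
  have := hC.isProb
  have ht := tp_eq_one_div hl hr
  have htp : tp l r = fun n : ℕ => 1 / ((n : ℝ) + 1) := funext ht
  have hx : Tendsto (xp l r) atTop atTop := by
    unfold xp
    simpa only [htp] using Real.tendsto_sum_range_one_div_nat_succ_atTop
  have habs := hC.ae_exists_eq_zero hx
  have hanti : Antitone (tp l r) := fun a b hab => by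
    rw [ht, ht]
    gcongr
  refine ⟨ht, ?_, hC.tendsto_lintegral_nhds_top hanti ?_ habs⟩
  · have hmeas : MeasurableSet {ω | ∃ m : ℕ, X m ω = 0} := by
      rw [Set.ofPred_exists]
      exact MeasurableSet.iUnion fun m => hC.meas m (measurableSet_singleton 0)
    rw [← measure_univ (μ := P)]
    exact (ae_iff_measure_eq hmeas.nullMeasurableSet).1 habs
  · simpa only [htp] using tendsto_one_div_add_atTop_nhds_zero_nat
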